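/- arXiv:2303.02438 — 3 statements merged into one kernel-verified Lean document; each statement's English description precedes it below -/
import Mathlib

section
/- Let Λ be a real p×d matrix with full rank d, and let ρ, ν, α > 0. Let μ be the Gamma distribution on (0,∞) with shape ν + d/2 and rate β = 1/(2 det(ΛᵀΛ)^{1/d} α²), i.e., with density (β^{ν+d/2}/Γ(ν+d/2)) w^{ν+d/2−1} e^{−βw}. Set h(0) = (2π)^{−d/2} det(ΛᵀΛ)^{1/2} ∫₀^∞ w^{−d/2} dμ(w). Then for every x ∈ ℝ^d, (ρ/h(0)) ∫₀^∞ exp(−2π² w · xᵀ(ΛᵀΛ)^{−1}x) dμ(w) = ρ · (Γ(ν+d/2)/Γ(ν)) · (2√π α)^d · (1 + 4π² α² det(ΛᵀΛ)^{1/d} · xᵀ(ΛᵀΛ)^{−1}x)^{−(ν+d/2)}. -/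
open MeasureTheory Matrix Real ProbabilityTheory Set
open scoped ENNReal

/-!
Both integrals against the Gamma law are instances of the closed form
`∫ w^s e^{-cw} dΓ(a, r) = r^a Γ(a+s) / (Γ(a) (r+c)^{a+s})`: with `c = 0` it gives `h(0)`,
and with `s = 0` the Laplace transform `(1 + c/r)^{-a}`. The rate `β` is chosen so that the
constants `(2π)^{-d/2} √det(ΛᵀΛ) β^{d/2}` collapse to `(2√π α)^{-d}`.
-/

theorem Matrix.mulVec_injective_of_rank_eq_card {K m n : Type*} [Field K] [Fintype n]
    {A : Matrix m n K} (hA : A.rank = Fintype.card n) : Function.Injective A.mulVec := by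
  have h := LinearMap.finrank_range_add_finrank_ker A.mulVecLin
  rw [Module.finrank_fintype_fun_eq_card, ← Matrix.rank, hA, Nat.add_eq_left] at h
  exact LinearMap.ker_eq_bot.mp (Submodule.finrank_eq_zero.mp h)

theorem Matrix.posDef_transpose_mul_self_of_rank_eq_card {m n : Type*} [Fintype m] [Fintype n]
    {A : Matrix m n ℝ} (hA : A.rank = Fintype.card n) : (Aᵀ * A).PosDef := by
  simpa using PosDef.conjTranspose_mul_self A (mulVec_injective_of_rank_eq_card hA)

theorem integral_rpow_mul_exp_neg_mul_gammaMeasure {a r s c : ℝ} (ha : 0 < a) (hr : 0 < r)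
    (has : 0 < a + s) (hrc : 0 < r + c) :
    ∫ w, w ^ s * exp (-(c * w)) ∂(gammaMeasure a r)
      = r ^ a * Gamma (a + s) / (Gamma a * (r + c) ^ (a + s)) := by
  have hpdf : gammaMeasure a r
      = volume.withDensity fun w => ((gammaPDFReal a r w).toNNReal : ℝ≥0∞) := rfl
  have hae : (fun w : ℝ => (gammaPDFReal a r w).toNNReal • (w ^ s * exp (-(c * w))))
      =ᵐ[volume] (Ioi 0).indicator
        fun w => r ^ a / Gamma a * (w ^ (a + s - 1) * exp (-((r + c) * w))) := by
    filter_upwards [Measure.ae_ne volume 0] with w hw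
    rcases hw.lt_or_gt with hneg | hpos
    · simp [gammaPDFReal, hneg.not_ge, hneg.le]
    · have hval : gammaPDFReal a r w = r ^ a / Gamma a * w ^ (a - 1) * exp (-(r * w)) := by
        simp [gammaPDFReal, hpos.le]
      rw [indicator_of_mem (mem_Ioi.mpr hpos), NNReal.smul_def,
        Real.coe_toNNReal _ (by rw [hval]; positivity), hval, smul_eq_mul,
        show a + s - 1 = (a - 1) + s by ring, rpow_add hpos,
        show -((r + c) * w) = -(r * w) + -(c * w) by ring, exp_add]
      ring
  rw [hpdf, integral_withDensity_eq_integral_smul (measurable_gammaPDFReal a r).real_toNNReal,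
    integral_congr_ae hae, integral_indicator measurableSet_Ioi, integral_const_mul,
    integral_rpow_mul_exp_neg_mul_Ioi has hrc, one_div, inv_rpow hrc.le]
  field_simp

theorem integral_rpow_gammaMeasure {a r s : ℝ} (ha : 0 < a) (hr : 0 < r) (has : 0 < a + s) :
    ∫ w, w ^ s ∂(gammaMeasure a r) = r ^ (-s) * Gamma (a + s) / Gamma a := by
  have h := integral_rpow_mul_exp_neg_mul_gammaMeasure ha hr has (c := 0) (by simpa using hr)
  simp only [zero_mul, neg_zero, exp_zero, mul_one, add_zero] at h
  rw [h, rpow_add hr, rpow_neg hr.le]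
  field_simp

theorem integral_exp_neg_mul_gammaMeasure {a r c : ℝ} (ha : 0 < a) (hr : 0 < r)
    (hrc : 0 < r + c) :
    ∫ w, exp (-(c * w)) ∂(gammaMeasure a r) = (1 + c / r) ^ (-a) := by
  have h := integral_rpow_mul_exp_neg_mul_gammaMeasure ha hr (s := 0) (by simpa using ha) hrc
  simp only [rpow_zero, one_mul, add_zero] at h
  rw [h, show 1 + c / r = (r + c) / r by field_simp, div_rpow hrc.le hr.le, rpow_neg hrc.le,
    rpow_neg hr.le]
  have := (Gamma_pos_of_pos ha).ne'
  field_simp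

theorem two_pi_rpow_mul_sqrt_mul_rpow_eq_inv_pow {d : ℕ} (hd : d ≠ 0) {D α : ℝ} (hD : 0 < D)
    (hα : 0 < α) :
    (2 * π) ^ (-(d : ℝ) / 2) * √D * (1 / (2 * D ^ ((1 : ℝ) / d) * α ^ 2)) ^ ((d : ℝ) / 2)
      = ((2 * √π * α) ^ d)⁻¹ := by
  have hL : 0 < D ^ ((1 : ℝ) / d) := rpow_pos_of_pos hD _
  have hsqrt : √D = (D ^ ((1 : ℝ) / d)) ^ ((d : ℝ) / 2) := by
    rw [sqrt_eq_rpow, ← rpow_mul hD.le]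
    congr 1
    field_simp
  have hsq : (2 * √π * α) ^ 2 = 4 * π * α ^ 2 := by
    rw [mul_pow, mul_pow, sq_sqrt pi_pos.le]
    ring
  have hpow : (2 * √π * α) ^ d = ((2 * √π * α) ^ 2) ^ ((d : ℝ) / 2) := by
    rw [← rpow_natCast, ← rpow_natCast, ← rpow_mul (by positivity)]
    congr 1
    push_cast
    ring
  rw [hsqrt, hpow, hsq, neg_div, rpow_neg (by positivity), ← inv_rpow (by positivity),
    ← mul_rpow (by positivity) hL.le, ← mul_rpow (by positivity) (by positivity),
    ← inv_rpow (by positivity)]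
  congr 1
  field_simp
  ring

theorem stmt8_general (p d : ℕ) (hd : 1 ≤ d)
    (Λ : Matrix (Fin p) (Fin d) ℝ) (hΛ : Λ.rank = d)
    (ρ ν α : ℝ) (hν : 0 < ν) (hα : 0 < α)
    (β : ℝ) (hβ : β = 1 / (2 * (Λᵀ * Λ).det ^ ((1 : ℝ) / d) * α ^ 2))
    (μ : Measure ℝ) (hμ : μ = gammaMeasure (ν + d / 2) β)
    (h0 : ℝ)
    (hh0 : h0 = (2 * π) ^ (-(d : ℝ) / 2) * Real.sqrt (Λᵀ * Λ).det *
        ∫ w, w ^ (-(d : ℝ) / 2) ∂μ) :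
    ∀ x : Fin d → ℝ,
      (ρ / h0) * (∫ w, Real.exp (-(2 * π ^ 2 * w * (x ⬝ᵥ ((Λᵀ * Λ)⁻¹ *ᵥ x)))) ∂μ) =
        ρ * (Real.Gamma (ν + d / 2) / Real.Gamma ν) * (2 * Real.sqrt π * α) ^ d *
          (1 + 4 * π ^ 2 * α ^ 2 * (Λᵀ * Λ).det ^ ((1 : ℝ) / d) *
            (x ⬝ᵥ ((Λᵀ * Λ)⁻¹ *ᵥ x))) ^ (-(ν + (d : ℝ) / 2)) := by
  intro x
  have hPD : (Λᵀ * Λ).PosDef := posDef_transpose_mul_self_of_rank_eq_card (by simpa using hΛ)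
  have hq : 0 ≤ x ⬝ᵥ ((Λᵀ * Λ)⁻¹ *ᵥ x) := by
    simpa using hPD.inv.posSemidef.dotProduct_mulVec_nonneg x
  set q := x ⬝ᵥ ((Λᵀ * Λ)⁻¹ *ᵥ x)
  set L := (Λᵀ * Λ).det ^ ((1 : ℝ) / d)
  have hL : 0 < L := rpow_pos_of_pos hPD.det_pos _
  have hβ0 : 0 < β := by rw [hβ]; positivity
  have ha : 0 < ν + d / 2 := by positivity
  have hmoment :
      ∫ w, w ^ (-(d : ℝ) / 2) ∂μ = β ^ ((d : ℝ) / 2) * Gamma ν / Gamma (ν + d / 2) := by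
    rw [hμ, integral_rpow_gammaMeasure ha hβ0 (by ring_nf; exact hν)]
    ring_nf
  have hlaplace : ∫ w, exp (-(2 * π ^ 2 * w * q)) ∂μ
      = (1 + 4 * π ^ 2 * α ^ 2 * L * q) ^ (-(ν + (d : ℝ) / 2)) := by
    have h := integral_exp_neg_mul_gammaMeasure ha hβ0 (c := 2 * π ^ 2 * q) (by positivity)
    rw [hμ]
    convert h using 4 with w
    · ring_nf
    · rw [hβ]; field_simp; ring
  have hnorm := two_pi_rpow_mul_sqrt_mul_rpow_eq_inv_pow (by omega : d ≠ 0) hPD.det_pos hα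
  rw [← hβ] at hnorm
  have hΓν := (Gamma_pos_of_pos hν).ne'
  have hΓa := (Gamma_pos_of_pos ha).ne'
  rw [hh0, hmoment, hlaplace, mul_div_assoc, ← mul_assoc, hnorm]
  field_simp

theorem stmt8 (p d : ℕ) (hd : 1 ≤ d) (hdp : d ≤ p)
    (Λ : Matrix (Fin p) (Fin d) ℝ) (hΛ : Λ.rank = d)
    (ρ ν α : ℝ) (hρ : 0 < ρ) (hν : 0 < ν) (hα : 0 < α)
    (β : ℝ) (hβ : β = 1 / (2 * (Λᵀ * Λ).det ^ ((1 : ℝ) / d) * α ^ 2))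
    (μ : Measure ℝ) (hμ : μ = gammaMeasure (ν + d / 2) β)
    (h0 : ℝ)
    (hh0 : h0 = (2 * π) ^ (-(d : ℝ) / 2) * Real.sqrt (Λᵀ * Λ).det *
        ∫ w, w ^ (-(d : ℝ) / 2) ∂μ) :
    ∀ x : Fin d → ℝ,
      (ρ / h0) * (∫ w, Real.exp (-(2 * π ^ 2 * w * (x ⬝ᵥ ((Λᵀ * Λ)⁻¹ *ᵥ x)))) ∂μ) =
        ρ * (Real.Gamma (ν + d / 2) / Real.Gamma ν) * (2 * Real.sqrt π * α) ^ d *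
          (1 + 4 * π ^ 2 * α ^ 2 * (Λᵀ * Λ).det ^ ((1 : ℝ) / d) *
            (x ⬝ᵥ ((Λᵀ * Λ)⁻¹ *ᵥ x))) ^ (-(ν + (d : ℝ) / 2)) :=
  stmt8_general p d hd Λ hΛ ρ ν α hν hα β hβ μ hμ h0 hh0
end

section
/- Fix k ∈ ℝ^d and constants ρ, ν, α > 0, and for a real p×d matrix Λ of full rank d define a^{(k)}(Λ) = 1 + 4π²α² det(ΛᵀΛ)^{1/d} kᵀ(ΛᵀΛ)^{−1}k and the Whittle–Matérn-like spectral density φ_Λ(k) = ρ (Γ(ν+d/2)/Γ(ν)) (2√π α)^d · a^{(k)}(Λ)^{−(ν+d/2)}. Then the map Λ ↦ φ_Λ(k) is Fréchet differentiable at every full-rank Λ with gradient −4π²α²(ν + d/2) · [φ_Λ(k)/a^{(k)}(Λ)] · g^{(k)}(Λ), where g^{(k)}(Λ) = 2 det(ΛᵀΛ)^{1/d} Λ (ΛᵀΛ)^{−1} [ (1/d)(kᵀ(ΛᵀΛ)^{−1}k) I_d − k kᵀ (ΛᵀΛ)^{−1} ]. -/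
open Matrix Real

attribute [local instance] Matrix.normedAddCommGroup Matrix.normedSpace

/-- The continuous linear map `H ↦ tr(Gᵀ H)`, representing the gradient `G`. -/
noncomputable def gradCLM {p d : ℕ} (G : Matrix (Fin p) (Fin d) ℝ) :
    Matrix (Fin p) (Fin d) ℝ →L[ℝ] ℝ :=
  LinearMap.toContinuousLinearMap
    { toFun := fun H => (Gᵀ * H).trace
      map_add' := fun H₁ H₂ => by simp [Matrix.mul_add]
      map_smul' := fun c H => by simp [Matrix.mul_smul] }

/-- The gradient matrix `g^{(k)}(Λ)`. -/
noncomputable def gMat {p d : ℕ} (k : Fin d → ℝ) (Λ : Matrix (Fin p) (Fin d) ℝ) :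
    Matrix (Fin p) (Fin d) ℝ :=
  (2 * (Λᵀ * Λ).det ^ ((1 : ℝ) / d)) •
    (Λ * (Λᵀ * Λ)⁻¹ *
      (((k ⬝ᵥ ((Λᵀ * Λ)⁻¹ *ᵥ k)) / d) • (1 : Matrix (Fin d) (Fin d) ℝ) -
        Matrix.vecMulVec k k * (Λᵀ * Λ)⁻¹))

/-- `a^{(k)}(Λ) = 1 + 4π²α² det(ΛᵀΛ)^{1/d} kᵀ(ΛᵀΛ)⁻¹k`. -/
noncomputable def aWM {p d : ℕ} (α : ℝ) (k : Fin d → ℝ)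
    (Λ : Matrix (Fin p) (Fin d) ℝ) : ℝ :=
  1 + 4 * π ^ 2 * α ^ 2 * (Λᵀ * Λ).det ^ ((1 : ℝ) / d) * (k ⬝ᵥ ((Λᵀ * Λ)⁻¹ *ᵥ k))

/-- The Whittle–Matérn-like spectral density `φ_Λ(k)`. -/
noncomputable def phiWM {p d : ℕ} (ρ ν α : ℝ) (k : Fin d → ℝ)
    (Λ : Matrix (Fin p) (Fin d) ℝ) : ℝ :=
  ρ * (Real.Gamma (ν + d / 2) / Real.Gamma ν) * (2 * Real.sqrt π * α) ^ d *
    aWM α k Λ ^ (-(ν + (d : ℝ) / 2))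

/-!
Write `φ_Λ(k) = C a(Λ)^{-(ν+d/2)}` with `a = 1 + 4π²α² E` and
`E(L) = det(LᵀL)^{1/d} kᵀ(LᵀL)⁻¹k`. Jacobi's formula `d det_M = tr(adj M ·)` and
`d(M⁻¹) = -M⁻¹ · M⁻¹` give derivatives of the form `X ↦ tr(A X)` with `A` symmetric at
`M = ΛᵀΛ`, and the Gram map `L ↦ LᵀL` turns each of them into the gradient `2ΛA`. Full rank
makes `ΛᵀΛ` positive definite, so `det(ΛᵀΛ) > 0` and `a > 0`, and the real powers are smooth
there; the product and chain rules then assemble `g^{(k)}(Λ)` as the gradient of `E`.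
-/

theorem map_ringInverse {M N F : Type*} [MonoidWithZero M] [MonoidWithZero N] [EquivLike F M N]
    [MulEquivClass F M N] (e : F) (x : M) : e (Ring.inverse x) = Ring.inverse (e x) := by
  by_cases hx : IsUnit x
  · obtain ⟨u, rfl⟩ := hx
    rw [Ring.inverse_unit]
    exact (Ring.inverse_unit (Units.map (e : M →* N) u)).symm
  · rw [Ring.inverse_non_unit x hx, Ring.inverse_non_unit _ (by rwa [isUnit_map_iff]), map_zero]

namespace Matrix

variable {n : Type*} [Fintype n]

theorem trace_mul_vecMulVec {R : Type*} [CommRing R] (W : Matrix n n R) (k : n → R) :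
    (W * vecMulVec k k).trace = k ⬝ᵥ (W *ᵥ k) := by
  rw [mul_vecMulVec, trace_vecMulVec, dotProduct_comm]

variable [DecidableEq n]

theorem sum_det_updateRow {R : Type*} [CommRing R] (M H : Matrix n n R) :
    ∑ i, (M.updateRow i (H i)).det = (M.adjugate * H).trace := by
  simp only [← cramer_transpose_apply, cramer_eq_adjugate_mulVec, trace, diag_apply, mul_apply,
    mulVec, dotProduct]
  rw [← adjugate_transpose, Finset.sum_comm]
  rfl

variable {𝕜 : Type*}

noncomputable def detRowContinuousMultilinear [NontriviallyNormedField 𝕜] :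
    ContinuousMultilinearMap 𝕜 (fun _ : n => n → 𝕜) 𝕜 where
  toMultilinearMap := (detRowAlternating (n := n) (R := 𝕜)).toMultilinearMap
  cont := continuous_id.matrix_det

theorem hasFDerivAt_det [NontriviallyNormedField 𝕜] [CompleteSpace 𝕜] (M : Matrix n n 𝕜) :
    HasFDerivAt det
      (LinearMap.toContinuousLinearMap (traceLinearMap n 𝕜 𝕜 ∘ₗ LinearMap.mulLeft 𝕜 M.adjugate))
      M := by
  refine HasFDerivAt.congr_fderiv (f := det)
    ((detRowContinuousMultilinear (n := n) (𝕜 := 𝕜)).hasFDerivAt M) ?_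
  ext H
  exact (ContinuousMultilinearMap.linearDeriv_apply ..).trans (sum_det_updateRow M H)

/-- The sup norm does not make matrices a normed ring, so inversion is differentiated in the
complete normed algebra of operators on `EuclideanSpace 𝕜 n` and transported back. -/
theorem hasFDerivAt_inv [RCLike 𝕜] {M : Matrix n n 𝕜} (hM : IsUnit M) :
    HasFDerivAt (fun N : Matrix n n 𝕜 => N⁻¹)
      (LinearMap.toContinuousLinearMap (-(LinearMap.mulLeft 𝕜 M⁻¹ ∘ₗ LinearMap.mulRight 𝕜 M⁻¹)))
      M := by
  let φ := toEuclideanCLM (n := n) (𝕜 := 𝕜)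
  let e := φ.toAlgEquiv.toLinearEquiv.toContinuousLinearEquiv
  have hinv : ∀ N : Matrix n n 𝕜, N⁻¹ = e.symm (Ring.inverse (e N)) := fun N => by
    change _ = e.symm (Ring.inverse (φ N))
    rw [nonsing_inv_eq_ringInverse, ← map_ringInverse φ]
    exact (e.symm_apply_apply _).symm
  have hu : ↑(hM.map φ).unit⁻¹ = φ M⁻¹ := by
    rw [← Ring.inverse_of_isUnit, nonsing_inv_eq_ringInverse, map_ringInverse]
  rw [show (fun N : Matrix n n 𝕜 => N⁻¹) = _ from funext hinv]
  refine ((e.symm : _ →L[𝕜] Matrix n n 𝕜).hasFDerivAt.comp M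
    ((hasFDerivAt_ringInverse (𝕜 := 𝕜) (hM.map φ).unit).comp M e.hasFDerivAt)).congr_fderiv ?_
  ext1 H
  change e.symm (-(_ * φ H * _)) = -(M⁻¹ * (H * M⁻¹))
  rw [hu, ← map_mul, ← map_mul, ← map_neg, ← mul_assoc]
  exact e.symm_apply_apply _

theorem posDef_transpose_mul_self_of_rank_eq {m : Type*} [Fintype m] (A : Matrix m n ℝ)
    (hA : A.rank = Fintype.card n) : (Aᵀ * A).PosDef := by
  have hpsd : (Aᵀ * A).PosSemidef := by
    simpa using posSemidef_conjTranspose_mul_self A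
  refine hpsd.posDef_iff_isUnit.mpr (mulVec_surjective_iff_isUnit.mp ?_)
  have hrange : LinearMap.range (Aᵀ * A).mulVecLin = ⊤ :=
    Submodule.eq_top_of_finrank_eq (by rw [← rank, rank_transpose_mul_self, hA,
      Module.finrank_fintype_fun_eq_card])
  exact LinearMap.range_eq_top.mp hrange

end Matrix

section Gradient

variable {p d : ℕ}

theorem HasDerivAt.comp_hasFDerivAt_gradCLM {φ : ℝ → ℝ} {φ' : ℝ}
    {f : Matrix (Fin p) (Fin d) ℝ → ℝ} {F Λ : Matrix (Fin p) (Fin d) ℝ}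
    (hφ : HasDerivAt φ φ' (f Λ)) (hf : HasFDerivAt f (gradCLM F) Λ) :
    HasFDerivAt (fun L => φ (f L)) (gradCLM (φ' • F)) Λ := by
  refine (hφ.comp_hasFDerivAt Λ hf).congr_fderiv ?_
  ext1 H
  change φ' * (Fᵀ * H).trace = ((φ' • F)ᵀ * H).trace
  rw [transpose_smul, smul_mul, trace_smul, smul_eq_mul]

theorem HasFDerivAt.mul_gradCLM {f g : Matrix (Fin p) (Fin d) ℝ → ℝ}
    {F G Λ : Matrix (Fin p) (Fin d) ℝ} (hf : HasFDerivAt f (gradCLM F) Λ)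
    (hg : HasFDerivAt g (gradCLM G) Λ) :
    HasFDerivAt (fun L => f L * g L) (gradCLM (f Λ • G + g Λ • F)) Λ := by
  refine (hf.mul hg).congr_fderiv ?_
  ext1 H
  change f Λ * (Gᵀ * H).trace + g Λ * (Fᵀ * H).trace = ((f Λ • G + g Λ • F)ᵀ * H).trace
  rw [transpose_add, Matrix.add_mul, trace_add, transpose_smul, transpose_smul, smul_mul,
    smul_mul, trace_smul, trace_smul, smul_eq_mul, smul_eq_mul]

theorem trace_mul_transpose_mul_add {A : Matrix (Fin d) (Fin d) ℝ} (hA : Aᵀ = A)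
    (Λ H : Matrix (Fin p) (Fin d) ℝ) :
    (A * (Λᵀ * H + Hᵀ * Λ)).trace = (((2 : ℝ) • (Λ * A))ᵀ * H).trace := by
  have h : (A * (Hᵀ * Λ)).trace = (A * (Λᵀ * H)).trace := by
    rw [← trace_transpose, transpose_mul, transpose_mul, transpose_transpose, hA,
      ← Matrix.mul_assoc, trace_mul_comm, Matrix.mul_assoc]
  rw [Matrix.mul_add, trace_add, h, transpose_smul, transpose_mul, hA, smul_mul, trace_smul,
    Matrix.mul_assoc, two_smul]

theorem hasFDerivAt_comp_transpose_mul_self {f : Matrix (Fin d) (Fin d) ℝ → ℝ}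
    {f' : Matrix (Fin d) (Fin d) ℝ →L[ℝ] ℝ} {A : Matrix (Fin d) (Fin d) ℝ}
    {Λ : Matrix (Fin p) (Fin d) ℝ} (hA : Aᵀ = A) (hf : HasFDerivAt f f' (Λᵀ * Λ))
    (hf' : ∀ X, f' X = (A * X).trace) :
    HasFDerivAt (fun L : Matrix (Fin p) (Fin d) ℝ => f (Lᵀ * L))
      (gradCLM ((2 : ℝ) • (Λ * A))) Λ := by
  let mul :
      Matrix (Fin d) (Fin p) ℝ →L[ℝ] Matrix (Fin p) (Fin d) ℝ →L[ℝ] Matrix (Fin d) (Fin d) ℝ :=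
    LinearMap.toContinuousLinearMap
      (LinearMap.toContinuousLinearMap.toLinearMap ∘ₗ mulLinearMap ℝ)
  let transpose : Matrix (Fin p) (Fin d) ℝ →L[ℝ] Matrix (Fin d) (Fin p) ℝ :=
    LinearMap.toContinuousLinearMap (transposeLinearEquiv _ _ ℝ ℝ).toLinearMap
  have hgram : HasFDerivAt (fun L : Matrix (Fin p) (Fin d) ℝ => Lᵀ * L) _ Λ :=
    mul.hasFDerivAt_of_bilinear transpose.hasFDerivAt (hasFDerivAt_id Λ)
  refine (hf.comp (f := fun L : Matrix (Fin p) (Fin d) ℝ => Lᵀ * L) Λ hgram).congr_fderiv ?_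
  ext1 H
  change f' (Λᵀ * H + Hᵀ * Λ) = (((2 : ℝ) • (Λ * A))ᵀ * H).trace
  rw [hf', trace_mul_transpose_mul_add hA]

theorem hasFDerivAt_det_transpose_mul_self (Λ : Matrix (Fin p) (Fin d) ℝ) :
    HasFDerivAt (fun L : Matrix (Fin p) (Fin d) ℝ => (Lᵀ * L).det)
      (gradCLM ((2 : ℝ) • (Λ * (Λᵀ * Λ).adjugate))) Λ := by
  refine hasFDerivAt_comp_transpose_mul_self ?_ (hasFDerivAt_det _) fun _ => rfl
  rw [adjugate_transpose, transpose_mul, transpose_transpose]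

theorem hasFDerivAt_dotProduct_inv_transpose_mul_self_mulVec (k : Fin d → ℝ)
    {Λ : Matrix (Fin p) (Fin d) ℝ} (hΛ : IsUnit (Λᵀ * Λ)) :
    HasFDerivAt (fun L : Matrix (Fin p) (Fin d) ℝ => k ⬝ᵥ ((Lᵀ * L)⁻¹ *ᵥ k))
      (gradCLM ((2 : ℝ) • (Λ * -((Λᵀ * Λ)⁻¹ * vecMulVec k k * (Λᵀ * Λ)⁻¹)))) Λ := by
  set M := Λᵀ * Λ
  have hMinv : (M⁻¹)ᵀ = M⁻¹ := by
    rw [transpose_nonsing_inv, transpose_mul, transpose_transpose]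
  let quad : Matrix (Fin d) (Fin d) ℝ →L[ℝ] ℝ := LinearMap.toContinuousLinearMap
    (traceLinearMap (Fin d) ℝ ℝ ∘ₗ LinearMap.mulRight ℝ (vecMulVec k k))
  have hquad : ∀ W, quad W = k ⬝ᵥ (W *ᵥ k) := fun W => trace_mul_vecMulVec W k
  refine hasFDerivAt_comp_transpose_mul_self (f' := quad.comp _) ?_
    (quad.hasFDerivAt.comp M (hasFDerivAt_inv hΛ) |>.congr_of_eventuallyEq
      (.of_forall fun N => (hquad N⁻¹).symm)) fun X => ?_
  · rw [transpose_neg, transpose_mul, transpose_mul, hMinv, transpose_vecMulVec, Matrix.mul_assoc]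
  · change quad (-(M⁻¹ * (X * M⁻¹))) = _
    rw [hquad, ← trace_mul_vecMulVec, Matrix.neg_mul, Matrix.neg_mul, trace_neg, trace_neg,
      trace_mul_comm _ X, Matrix.mul_assoc, trace_mul_comm M⁻¹]
    simp only [Matrix.mul_assoc]

theorem hasFDerivAt_det_rpow_mul_dotProduct_inv_mulVec (k : Fin d → ℝ)
    {Λ : Matrix (Fin p) (Fin d) ℝ} (hΛ : (Λᵀ * Λ).PosDef) :
    HasFDerivAt
      (fun L : Matrix (Fin p) (Fin d) ℝ =>
        (Lᵀ * L).det ^ ((1 : ℝ) / d) * (k ⬝ᵥ ((Lᵀ * L)⁻¹ *ᵥ k)))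
      (gradCLM (gMat k Λ)) Λ := by
  have hdet : (Λᵀ * Λ).det ≠ 0 := hΛ.det_pos.ne'
  have hadj : (Λᵀ * Λ).adjugate = (Λᵀ * Λ).det • (Λᵀ * Λ)⁻¹ := by
    rw [inv_def, smul_smul, Ring.mul_inverse_cancel _ hdet.isUnit, one_smul]
  refine (HasDerivAt.comp_hasFDerivAt_gradCLM (f := fun L => (Lᵀ * L).det)
    (Real.hasDerivAt_rpow_const (Or.inl hdet)) (hasFDerivAt_det_transpose_mul_self Λ)).mul_gradCLM
    (hasFDerivAt_dotProduct_inv_transpose_mul_self_mulVec k hΛ.isUnit) |>.congr_fderiv ?_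
  congr 1
  rw [gMat, hadj, rpow_sub_one hdet]
  simp only [Matrix.mul_sub, Matrix.mul_smul, Matrix.mul_one, Matrix.mul_neg, ← Matrix.mul_assoc]
  match_scalars <;> field_simp

theorem aWM_pos (α : ℝ) (k : Fin d → ℝ) (Λ : Matrix (Fin p) (Fin d) ℝ) : 0 < aWM α k Λ := by
  have hM : (Λᵀ * Λ).PosSemidef := by simpa using posSemidef_conjTranspose_mul_self Λ
  have hdet : 0 ≤ (Λᵀ * Λ).det ^ ((1 : ℝ) / d) := rpow_nonneg hM.det_nonneg _
  have hquad : 0 ≤ k ⬝ᵥ ((Λᵀ * Λ)⁻¹ *ᵥ k) := by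
    simpa using hM.inv.dotProduct_mulVec_nonneg k
  unfold aWM
  positivity

theorem hasFDerivAt_aWM (α : ℝ) (k : Fin d → ℝ) {Λ : Matrix (Fin p) (Fin d) ℝ}
    (hΛ : (Λᵀ * Λ).PosDef) :
    HasFDerivAt (aWM α k) (gradCLM ((4 * π ^ 2 * α ^ 2) • gMat k Λ)) Λ := by
  refine ((hasDerivAt_const_mul _).const_add 1).comp_hasFDerivAt_gradCLM
    (hasFDerivAt_det_rpow_mul_dotProduct_inv_mulVec k hΛ) |>.congr_of_eventuallyEq
    (.of_forall fun L => ?_)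
  rw [aWM, mul_assoc]

end Gradient

theorem stmt17_general (p d : ℕ)
    (k : Fin d → ℝ) (ρ ν α : ℝ)
    (Λ : Matrix (Fin p) (Fin d) ℝ) (hΛ : Λ.rank = d) :
    HasFDerivAt (fun L : Matrix (Fin p) (Fin d) ℝ => phiWM ρ ν α k L)
      (gradCLM ((-(4 * π ^ 2 * α ^ 2 * (ν + (d : ℝ) / 2)) *
        (phiWM ρ ν α k Λ / aWM α k Λ)) • gMat k Λ)) Λ := by
  have hpd := posDef_transpose_mul_self_of_rank_eq Λ (by rw [hΛ, Fintype.card_fin])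
  have ha := (aWM_pos α k Λ).ne'
  refine ((Real.hasDerivAt_rpow_const (Or.inl ha)).const_mul _).comp_hasFDerivAt_gradCLM
    (hasFDerivAt_aWM α k hpd) |>.congr_fderiv ?_
  rw [smul_smul, phiWM, rpow_sub_one ha]
  congr 2
  ring

theorem stmt17 (p d : ℕ) (hd : 1 ≤ d) (hdp : d ≤ p)
    (k : Fin d → ℝ) (ρ ν α : ℝ) (hρ : 0 < ρ) (hν : 0 < ν) (hα : 0 < α)
    (Λ : Matrix (Fin p) (Fin d) ℝ) (hΛ : Λ.rank = d) :
    HasFDerivAt (fun L : Matrix (Fin p) (Fin d) ℝ => phiWM ρ ν α k L)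
      (gradCLM ((-(4 * π ^ 2 * α ^ 2 * (ν + (d : ℝ) / 2)) *
        (phiWM ρ ν α k Λ / aWM α k Λ)) • gMat k Λ)) Λ :=
  stmt17_general p d k ρ ν α Λ hΛ
end

section
/- Fix N ∈ ℕ, constants ρ, ν, α > 0, and points t₁,…,t_m ∈ ℝ^d. For k ∈ Z_N^d := {−N,…,N}^d define complex vectors u_k, v_k ∈ ℂ^m by (u_k)_j = exp(2πi⟨k,t_j⟩) and (v_k)_j = exp(−2πi⟨k,t_j⟩), and for a real p×d matrix Λ of full rank d define a^{(k)}(Λ) = 1 + 4π²α² det(ΛᵀΛ)^{1/d} kᵀ(ΛᵀΛ)^{−1}k, φ_Λ(k) = ρ (Γ(ν+d/2)/Γ(ν)) (2√π α)^d · a^{(k)}(Λ)^{−(ν+d/2)}, and the m×m complex matrix C^app(Λ) = Σ_{k∈Z_N^d} [φ_Λ(k)/(1−φ_Λ(k))] u_k v_kᵀ. Suppose φ_Λ(k) < 1 for all k ∈ Z_N^d and C^app(Λ) is invertible. Then for every entry index (a,b) with 1 ≤ a ≤ p, 1 ≤ b ≤ d, the partial derivative of the map Λ ↦ det C^app(Λ)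 with respect to the (a,b) entry of Λ equals det(C^app(Λ)) · (−4π²α²(ν + d/2)) · Σ_{k∈Z_N^d} [φ_Λ(k)/((1−φ_Λ(k))² a^{(k)}(Λ))] · g^{(k)}(Λ)_{ab} · (v_kᵀ (C^app(Λ))^{−1} u_k), where g^{(k)}(Λ) = 2 det(ΛᵀΛ)^{1/d} Λ (ΛᵀΛ)^{−1} [ (1/d)(kᵀ(ΛᵀΛ)^{−1}k) I_d − k kᵀ (ΛᵀΛ)^{−1} ]. -/
/-!
Differentiate along the line `s ↦ Λ + s • E` with `E = single a b 1`. The Gram matrix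
`G = ΛᵀΛ` moves with velocity `T = EᵀΛ + ΛᵀE`. Jacobi's formula gives
`(det G)' = det G · tr (G⁻¹ T) = 2 det G (Λ G⁻¹)_{ab}`, and `(G⁻¹)' = -G⁻¹ T G⁻¹` gives
`(kᵀ G⁻¹ k)' = -2 (Λ G⁻¹ k)_a (G⁻¹ k)_b`; together they make `a⁽ᵏ⁾' = 4π²α² g⁽ᵏ⁾_{ab}`.
The chain rule turns this into the derivative of `φ / (1 - φ)`, and Jacobi's formula applied to
`C = Σ_k φ / (1 - φ) • u_k v_kᵀ` yields `det C · Σ_k (φ / (1 - φ))' · v_kᵀ C⁻¹ u_k`,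
because `tr (C⁻¹ u vᵀ) = vᵀ C⁻¹ u`.
-/

open Matrix Real

/-- The lattice `Z_N^d = {-N, …, N}^d`. -/
noncomputable def latticeZN (d N : ℕ) : Finset (Fin d → ℤ) :=
  Fintype.piFinset fun _ => Finset.Icc (-(N : ℤ)) (N : ℤ)

/-- `(u_k)_j = exp(2πi⟨k, t_j⟩)`. -/
noncomputable def uVec {d m : ℕ} (t : Fin m → (Fin d → ℝ)) (k : Fin d → ℤ) :
    Fin m → ℂ :=
  fun j => Complex.exp (2 * π * Complex.I * (((fun i => (k i : ℝ)) ⬝ᵥ t j : ℝ) : ℂ))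

/-- `(v_k)_j = exp(−2πi⟨k, t_j⟩)`. -/
noncomputable def vVec {d m : ℕ} (t : Fin m → (Fin d → ℝ)) (k : Fin d → ℤ) :
    Fin m → ℂ :=
  fun j => Complex.exp (-(2 * π * Complex.I * (((fun i => (k i : ℝ)) ⬝ᵥ t j : ℝ) : ℂ)))

/-- The truncated spectral approximation `C^app(Λ) = Σ_k φ/(1−φ) u_k v_kᵀ`
for the Whittle–Matérn-like DPP. -/
noncomputable def CappWM {p d m : ℕ} (ρ ν α : ℝ) (N : ℕ) (t : Fin m → (Fin d → ℝ))
    (L : Matrix (Fin p) (Fin d) ℝ) : Matrix (Fin m) (Fin m) ℂ :=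
  ∑ k ∈ latticeZN d N,
    ((phiWM ρ ν α (fun i => (k i : ℝ)) L /
        (1 - phiWM ρ ν α (fun i => (k i : ℝ)) L) : ℝ) : ℂ) •
      Matrix.vecMulVec (uVec t k) (vVec t k)

open Topology

theorem Matrix.IsSymm.mulVec_eq_vecMul {n R : Type*} [Fintype n] [CommRing R] {S : Matrix n n R}
    (hS : S.IsSymm) (x : n → R) : S *ᵥ x = x ᵥ* S := by
  rw [← mulVec_transpose, hS.eq]

theorem Matrix.isSymm_transpose_mul_self' {m n R : Type*} [Fintype m] [CommRing R]
    (A : Matrix m n R) : (Aᵀ * A).IsSymm :=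
  transpose_mul Aᵀ A

theorem Matrix.posSemidef_transpose_mul_self {m n : Type*} [Fintype m] [Fintype n]
    (A : Matrix m n ℝ) : (Aᵀ * A).PosSemidef := by
  simpa using posSemidef_conjTranspose_mul_self A

theorem Matrix.posDef_transpose_mul_self_of_rank_eq_s19 {m n : Type*} [Fintype m] [Fintype n]
    (A : Matrix m n ℝ) (hA : A.rank = Fintype.card n) : (Aᵀ * A).PosDef := by
  have hker : Module.finrank ℝ (LinearMap.ker A.mulVecLin) = 0 := by
    have := LinearMap.finrank_range_add_finrank_ker A.mulVecLin
    rw [← rank, hA, Module.finrank_fintype_fun_eq_card] at this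
    omega
  have hinj : Function.Injective A.mulVec :=
    LinearMap.ker_eq_bot.mp (Submodule.finrank_eq_zero.mp hker)
  simpa using PosDef.conjTranspose_mul_self A hinj

theorem Matrix.transpose_single_mul_add_transpose_mul_single {m n R : Type*} [Fintype m]
    [DecidableEq m] [DecidableEq n] [CommRing R] (A : Matrix m n R) (a : m) (b : n) :
    (single a b (1 : R))ᵀ * A + Aᵀ * single a b (1 : R) =
      vecMulVec (Pi.single b 1) (A a) + vecMulVec (A a) (Pi.single b 1) := by
  ext i j
  simp [mul_apply, single, vecMulVec_apply, Pi.single_apply, ite_and]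
  simp only [@eq_comm _ i b, @eq_comm _ j b]

theorem Matrix.trace_mul_transpose_single_mul_add {m n R : Type*} [Fintype m] [Fintype n]
    [DecidableEq m] [DecidableEq n] [CommRing R] {S : Matrix n n R} (hS : S.IsSymm)
    (A : Matrix m n R) (a : m) (b : n) :
    (S * ((single a b (1 : R))ᵀ * A + Aᵀ * single a b (1 : R))).trace = 2 * (A * S) a b := by
  rw [transpose_single_mul_add_transpose_mul_single, Matrix.mul_add, mul_vecMulVec, mul_vecMulVec,
    trace_add, trace_vecMulVec, trace_vecMulVec, dotProduct_comm, dotProduct_mulVec,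
    dotProduct_single_one, dotProduct_single_one, hS.mulVec_eq_vecMul, mul_apply_eq_vecMul, two_mul]

theorem Matrix.dotProduct_mul_transpose_single_mul_add_mul_mulVec {m n R : Type*} [Fintype m]
    [Fintype n] [DecidableEq m] [DecidableEq n] [CommRing R] {S : Matrix n n R} (hS : S.IsSymm)
    (A : Matrix m n R) (a : m) (b : n) (k : n → R) :
    k ⬝ᵥ (S * ((single a b (1 : R))ᵀ * A + Aᵀ * single a b (1 : R)) * S) *ᵥ k =
      2 * (A *ᵥ (S *ᵥ k)) a * (S *ᵥ k) b := by
  rw [← mulVec_mulVec, ← mulVec_mulVec, dotProduct_mulVec, ← hS.mulVec_eq_vecMul,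
    transpose_single_mul_add_transpose_mul_single, add_mulVec, vecMulVec_mulVec, vecMulVec_mulVec]
  simp only [op_smul_eq_smul, dotProduct_add, dotProduct_smul, dotProduct_single_one, smul_eq_mul,
    single_one_dotProduct, dotProduct_comm (S *ᵥ k) (A a)]
  change A a ⬝ᵥ (S *ᵥ k) * _ + _ = 2 * (A a ⬝ᵥ (S *ᵥ k)) * _
  ring

theorem Matrix.sum_det_updateCol_eq_trace_adjugate_mul {n R : Type*} [Fintype n] [DecidableEq n]
    [CommRing R] (A B : Matrix n n R) :
    ∑ i, (A.updateCol i fun r => B r i).det = (A.adjugate * B).trace := by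
  simp only [← cramer_apply, cramer_eq_adjugate_mulVec, trace, diag, mul_apply, mulVec,
    dotProduct]

theorem Matrix.trace_adjugate_mul {n R : Type*} [Fintype n] [DecidableEq n] [CommRing R]
    {A : Matrix n n R} (hA : IsUnit A.det) (B : Matrix n n R) :
    (A.adjugate * B).trace = A.det * (A⁻¹ * B).trace := by
  rw [inv_def, Matrix.smul_mul, trace_smul, smul_eq_mul, ← mul_assoc, Ring.mul_inverse_cancel _ hA,
    one_mul]

section MatrixCalculus

attribute [local instance] Matrix.normedAddCommGroup Matrix.normedSpace

theorem hasDerivAt_matrix_iff {𝕜 F m n : Type*} [NontriviallyNormedField 𝕜]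
    [NormedAddCommGroup F] [NormedSpace 𝕜 F] [Fintype m] [Fintype n] {M : 𝕜 → Matrix m n F}
    {M' : Matrix m n F} {x : 𝕜} :
    HasDerivAt M M' x ↔ ∀ i j, HasDerivAt (fun s => M s i j) (M' i j) x :=
  hasDerivAt_pi.trans (forall_congr' fun _ => hasDerivAt_pi)

theorem HasDerivAt.matrix_transpose {𝕜 F m n : Type*} [NontriviallyNormedField 𝕜]
    [NormedAddCommGroup F] [NormedSpace 𝕜 F] [Fintype m] [Fintype n] {M : 𝕜 → Matrix m n F}
    {M' : Matrix m n F} {x : 𝕜} (hM : HasDerivAt M M' x) :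
    HasDerivAt (fun s => (M s)ᵀ) M'ᵀ x :=
  hasDerivAt_matrix_iff.mpr fun i j => hasDerivAt_matrix_iff.mp hM j i

theorem HasDerivAt.matrix_mul {𝕜 F l m n : Type*} [NontriviallyNormedField 𝕜] [NormedRing F]
    [NormedAlgebra 𝕜 F] [Fintype l] [Fintype m] [Fintype n] {A : 𝕜 → Matrix l m F}
    {B : 𝕜 → Matrix m n F} {A' : Matrix l m F} {B' : Matrix m n F} {x : 𝕜}
    (hA : HasDerivAt A A' x) (hB : HasDerivAt B B' x) :
    HasDerivAt (fun s => A s * B s) (A' * B x + A x * B') x := by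
  rw [hasDerivAt_matrix_iff] at *
  intro i j
  simp only [mul_apply, Matrix.add_apply, ← Finset.sum_add_distrib]
  exact HasDerivAt.fun_sum fun k _ => (hA i k).mul (hB k j)

theorem HasDerivAt.dotProduct_mulVec {𝕜 F m n : Type*} [NontriviallyNormedField 𝕜]
    [NormedRing F] [NormedAlgebra 𝕜 F] [Fintype m] [Fintype n] {M : 𝕜 → Matrix m n F}
    {M' : Matrix m n F} {x : 𝕜} (hM : HasDerivAt M M' x) (v : m → F) (w : n → F) :
    HasDerivAt (fun s => v ⬝ᵥ (M s *ᵥ w)) (v ⬝ᵥ (M' *ᵥ w)) x := by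
  rw [hasDerivAt_matrix_iff] at hM
  simp only [dotProduct, mulVec, Finset.mul_sum]
  exact HasDerivAt.fun_sum fun i _ => HasDerivAt.fun_sum fun j _ =>
    ((hM i j).mul_const (w j)).const_mul (v i)

theorem HasDerivAt.matrix_det {𝕜 F n : Type*} [NontriviallyNormedField 𝕜] [NormedCommRing F]
    [NormedAlgebra 𝕜 F] [Fintype n] [DecidableEq n] {M : 𝕜 → Matrix n n F} {M' : Matrix n n F}
    {x : 𝕜} (hM : HasDerivAt M M' x) :
    HasDerivAt (fun s => (M s).det) ((M x).adjugate * M').trace x := by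
  rw [hasDerivAt_matrix_iff] at hM
  rw [← sum_det_updateCol_eq_trace_adjugate_mul]
  simp only [det_apply']
  rw [Finset.sum_comm]
  refine HasDerivAt.fun_sum fun σ _ => ?_
  refine ((HasDerivAt.fun_finsetProd fun i _ => hM (σ i) i).const_mul
    ((Equiv.Perm.sign σ : ℤ) : F)).congr_deriv ?_
  rw [Finset.mul_sum]
  refine Finset.sum_congr rfl fun i _ => ?_
  rw [← Finset.mul_prod_erase _ _ (Finset.mem_univ i), updateCol_self, smul_eq_mul,
    Finset.prod_congr rfl fun j hj => updateCol_ne (Finset.ne_of_mem_erase hj)]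
  ring

theorem HasDerivAt.matrix_inv {𝕜 n : Type*} [NontriviallyNormedField 𝕜] [Fintype n]
    [DecidableEq n] {M : 𝕜 → Matrix n n 𝕜} {M' : Matrix n n 𝕜} {x : 𝕜}
    (hM : HasDerivAt M M' x) (hx : (M x).det ≠ 0) :
    HasDerivAt (fun s => (M s)⁻¹) (-((M x)⁻¹ * M' * (M x)⁻¹)) x := by
  have hcont : ContinuousAt (fun s => (M s)⁻¹) x := by
    refine (continuousAt_matrix_inv _ ?_).comp hM.continuousAt
    rw [Ring.inverse_eq_inv']
    exact continuousAt_inv₀ hx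
  have hdet : ∀ᶠ s in 𝓝 x, (M s).det ≠ 0 :=
    (continuous_id.matrix_det.continuousAt.comp hM.continuousAt).eventually_ne hx
  -- `(M s)⁻¹ - (M x)⁻¹ = (M s)⁻¹ (M x - M s) (M x)⁻¹` turns the slope of `M⁻¹` into one of `M`
  refine hasDerivAt_iff_tendsto_slope.mpr <|
    (((hcont.tendsto.mono_left nhdsWithin_le_nhds).mul hM.tendsto_slope).mul_const
      (M x)⁻¹).neg.congr' ?_
  filter_upwards [nhdsWithin_le_nhds hdet] with s hs
  have hunit : IsUnit (M s) ↔ IsUnit (M x) := by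
    simp only [isUnit_iff_isUnit_det, isUnit_iff_ne_zero]
    exact iff_of_true hs hx
  rw [slope_def_module, slope_def_module, Matrix.inv_sub_inv hunit, ← neg_sub (M x),
    Matrix.mul_smul, Matrix.smul_mul, Matrix.mul_neg, Matrix.neg_mul, smul_neg, neg_neg]

theorem hasDerivAt_transpose_mul_self_add_smul {𝕜 F m n : Type*} [NontriviallyNormedField 𝕜]
    [NormedRing F] [NormedAlgebra 𝕜 F] [Fintype m] [Fintype n] (A E : Matrix m n F) :
    HasDerivAt (fun s : 𝕜 => (A + s • E)ᵀ * (A + s • E)) (Eᵀ * A + Aᵀ * E) 0 := by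
  have hline : HasDerivAt (fun s : 𝕜 => A + s • E) E 0 :=
    (((hasDerivAt_id' (0 : 𝕜)).smul_const E).const_add A).congr_deriv (one_smul _ _)
  simpa using hline.matrix_transpose.matrix_mul hline

theorem hasDerivAt_det_sum_ofReal_smul_vecMulVec {ι m : Type*} [Fintype m] [DecidableEq m]
    (K : Finset ι) {f : ι → ℝ → ℝ} {f' : ι → ℝ} {x : ℝ} (u v : ι → m → ℂ)
    (hf : ∀ k ∈ K, HasDerivAt (f k) (f' k) x)
    (hC : IsUnit (∑ k ∈ K, (f k x : ℂ) • vecMulVec (u k) (v k)).det) :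
    HasDerivAt (fun s => (∑ k ∈ K, (f k s : ℂ) • vecMulVec (u k) (v k)).det)
      ((∑ k ∈ K, (f k x : ℂ) • vecMulVec (u k) (v k)).det *
        ∑ k ∈ K, (f' k : ℂ) *
          (v k ⬝ᵥ ((∑ k ∈ K, (f k x : ℂ) • vecMulVec (u k) (v k))⁻¹ *ᵥ u k))) x := by
  have hpath : HasDerivAt (fun s => ∑ k ∈ K, (f k s : ℂ) • vecMulVec (u k) (v k))
      (∑ k ∈ K, (f' k : ℂ) • vecMulVec (u k) (v k)) x :=
    HasDerivAt.fun_sum fun k hk => by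
      simpa only [Complex.coe_smul] using (hf k hk).smul_const (vecMulVec (u k) (v k))
  refine hpath.matrix_det.congr_deriv ?_
  rw [trace_adjugate_mul hC, Matrix.mul_sum, trace_sum]
  simp only [Matrix.mul_smul, trace_smul, mul_vecMulVec, trace_vecMulVec, smul_eq_mul,
    dotProduct_comm (v _)]

end MatrixCalculus

theorem HasDerivAt.div_one_sub {𝕜 : Type*} [NontriviallyNormedField 𝕜] {f : 𝕜 → 𝕜} {f' x : 𝕜}
    (hf : HasDerivAt f f' x) (hx : f x ≠ 1) :
    HasDerivAt (fun s => f s / (1 - f s)) (f' / (1 - f x) ^ 2) x :=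
  (hf.fun_div (hf.const_sub 1) (sub_ne_zero.mpr hx.symm)).congr_deriv (by ring)

theorem gMat_apply {p d : ℕ} (k : Fin d → ℝ) (Λ : Matrix (Fin p) (Fin d) ℝ) (a : Fin p)
    (b : Fin d) :
    gMat k Λ a b = 2 * (Λᵀ * Λ).det ^ ((1 : ℝ) / d) *
      (k ⬝ᵥ ((Λᵀ * Λ)⁻¹ *ᵥ k) / d * (Λ * (Λᵀ * Λ)⁻¹) a b -
        (Λ *ᵥ ((Λᵀ * Λ)⁻¹ *ᵥ k)) a * ((Λᵀ * Λ)⁻¹ *ᵥ k) b) := by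
  rw [gMat, Matrix.mul_sub, vecMulVec_mul, mul_vecMulVec, Matrix.mul_smul, Matrix.mul_one]
  simp only [Matrix.smul_apply, Matrix.sub_apply, vecMulVec_apply, smul_eq_mul]
  rw [← (isSymm_transpose_mul_self' Λ).inv.mulVec_eq_vecMul, ← mulVec_mulVec]

theorem one_le_aWM {p d : ℕ} (α : ℝ) (k : Fin d → ℝ) (Λ : Matrix (Fin p) (Fin d) ℝ) :
    1 ≤ aWM α k Λ := by
  have hG := posSemidef_transpose_mul_self Λ
  have hq : 0 ≤ k ⬝ᵥ ((Λᵀ * Λ)⁻¹ *ᵥ k) := by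
    simpa using hG.inv.dotProduct_mulVec_nonneg k
  have hδ : 0 ≤ (Λᵀ * Λ).det ^ ((1 : ℝ) / d) := rpow_nonneg hG.det_nonneg _
  have hc : (0 : ℝ) ≤ 4 * π ^ 2 * α ^ 2 := by positivity
  unfold aWM
  linarith [mul_nonneg (mul_nonneg hc hδ) hq]

theorem hasDerivAt_aWM {p d : ℕ} (α : ℝ) (k : Fin d → ℝ) {Λ : Matrix (Fin p) (Fin d) ℝ}
    (hΛ : (Λᵀ * Λ).det ≠ 0) (a : Fin p) (b : Fin d) :
    HasDerivAt (fun s : ℝ => aWM α k (Λ + s • single a b 1))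
      (4 * π ^ 2 * α ^ 2 * gMat k Λ a b) 0 := by
  have hS := (isSymm_transpose_mul_self' Λ).inv
  have hG := hasDerivAt_transpose_mul_self_add_smul (𝕜 := ℝ) Λ (single a b 1)
  have hδ := hG.matrix_det
  have hq := (hG.matrix_inv (by simpa using hΛ)).dotProduct_mulVec k k
  simp only [zero_smul, add_zero] at hδ hq
  rw [trace_adjugate_mul (isUnit_iff_ne_zero.mpr hΛ), trace_mul_transpose_single_mul_add hS] at hδ
  rw [neg_mulVec, dotProduct_neg, dotProduct_mul_transpose_single_mul_add_mul_mulVec hS] at hq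
  have hδ' := hδ.rpow_const (p := 1 / d) (Or.inl (by simpa using hΛ))
  refine ((hδ'.const_mul (4 * π ^ 2 * α ^ 2)).mul hq).const_add 1 |>.congr_deriv ?_
  simp only [zero_smul, add_zero]
  rw [gMat_apply, rpow_sub_one hΛ]
  field_simp
  ring

theorem hasDerivAt_phiWM {p d : ℕ} (ρ ν α : ℝ) (k : Fin d → ℝ) {Λ : Matrix (Fin p) (Fin d) ℝ}
    (hΛ : (Λᵀ * Λ).det ≠ 0) (a : Fin p) (b : Fin d) :
    HasDerivAt (fun s : ℝ => phiWM ρ ν α k (Λ + s • single a b 1))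
      (-(4 * π ^ 2 * α ^ 2 * (ν + d / 2)) * phiWM ρ ν α k Λ / aWM α k Λ * gMat k Λ a b) 0 := by
  have ha : aWM α k Λ ≠ 0 := (one_pos.trans_le (one_le_aWM α k Λ)).ne'
  have hpow := (hasDerivAt_aWM α k hΛ a b).rpow_const (p := -(ν + d / 2))
    (Or.inl (by simpa using ha))
  refine (hpow.const_mul _).congr_deriv ?_
  simp only [zero_smul, add_zero]
  rw [rpow_sub_one ha, phiWM]
  ring

theorem hasDerivAt_phiWM_div_one_sub {p d : ℕ} (ρ ν α : ℝ) (k : Fin d → ℝ)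
    {Λ : Matrix (Fin p) (Fin d) ℝ} (hΛ : (Λᵀ * Λ).det ≠ 0) (hφ : phiWM ρ ν α k Λ ≠ 1)
    (a : Fin p) (b : Fin d) :
    HasDerivAt
      (fun s : ℝ => phiWM ρ ν α k (Λ + s • single a b 1) /
        (1 - phiWM ρ ν α k (Λ + s • single a b 1)))
      (-(4 * π ^ 2 * α ^ 2 * (ν + d / 2)) *
        (phiWM ρ ν α k Λ / ((1 - phiWM ρ ν α k Λ) ^ 2 * aWM α k Λ) * gMat k Λ a b)) 0 := by
  have hquot := (hasDerivAt_phiWM ρ ν α k hΛ a b).div_one_sub (by simpa using hφ)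
  simp only [zero_smul, add_zero] at hquot
  refine hquot.congr_deriv ?_
  rw [mul_comm _ (aWM _ _ _), ← div_div]
  ring

theorem stmt19_general (p d m : ℕ)
    (N : ℕ) (ρ ν α : ℝ)
    (t : Fin m → (Fin d → ℝ))
    (Λ : Matrix (Fin p) (Fin d) ℝ) (hΛ : Λ.rank = d)
    (hφ : ∀ k ∈ latticeZN d N, phiWM ρ ν α (fun i => (k i : ℝ)) Λ < 1)
    (hC : IsUnit (CappWM ρ ν α N t Λ).det) :
    ∀ (a : Fin p) (b : Fin d),
      HasDerivAt
        (fun s : ℝ => (CappWM ρ ν α N t (Λ + s • Matrix.single a b 1)).det)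
        ((CappWM ρ ν α N t Λ).det *
          ((-(4 * π ^ 2 * α ^ 2 * (ν + (d : ℝ) / 2)) : ℝ) : ℂ) *
          ∑ k ∈ latticeZN d N,
            ((phiWM ρ ν α (fun i => (k i : ℝ)) Λ /
                ((1 - phiWM ρ ν α (fun i => (k i : ℝ)) Λ) ^ 2 *
                  aWM α (fun i => (k i : ℝ)) Λ) *
                gMat (fun i => (k i : ℝ)) Λ a b : ℝ) : ℂ) *
              (vVec t k ⬝ᵥ ((CappWM ρ ν α N t Λ)⁻¹ *ᵥ uVec t k)))
        0 := by
  intro a b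
  have hΛ' : (Λᵀ * Λ).det ≠ 0 :=
    (posDef_transpose_mul_self_of_rank_eq_s19 Λ (by simpa using hΛ)).det_pos.ne'
  unfold CappWM at hC ⊢
  have key := hasDerivAt_det_sum_ofReal_smul_vecMulVec _ (uVec t) (vVec t)
    (fun k hk => hasDerivAt_phiWM_div_one_sub ρ ν α (fun i => (k i : ℝ)) hΛ' (hφ k hk).ne a b)
    (by simp only [zero_smul, add_zero]; exact hC)
  simp only [zero_smul, add_zero] at key
  refine key.congr_deriv ?_
  simp only [Complex.ofReal_mul, Finset.mul_sum, mul_assoc]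

theorem stmt19 (p d m : ℕ) (hd : 1 ≤ d) (hdp : d ≤ p)
    (N : ℕ) (ρ ν α : ℝ) (hρ : 0 < ρ) (hν : 0 < ν) (hα : 0 < α)
    (t : Fin m → (Fin d → ℝ))
    (Λ : Matrix (Fin p) (Fin d) ℝ) (hΛ : Λ.rank = d)
    (hφ : ∀ k ∈ latticeZN d N, phiWM ρ ν α (fun i => (k i : ℝ)) Λ < 1)
    (hC : IsUnit (CappWM ρ ν α N t Λ).det) :
    ∀ (a : Fin p) (b : Fin d),
      HasDerivAt
        (fun s : ℝ => (CappWM ρ ν α N t (Λ + s • Matrix.single a b 1)).det)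
        ((CappWM ρ ν α N t Λ).det *
          ((-(4 * π ^ 2 * α ^ 2 * (ν + (d : ℝ) / 2)) : ℝ) : ℂ) *
          ∑ k ∈ latticeZN d N,
            ((phiWM ρ ν α (fun i => (k i : ℝ)) Λ /
                ((1 - phiWM ρ ν α (fun i => (k i : ℝ)) Λ) ^ 2 *
                  aWM α (fun i => (k i : ℝ)) Λ) *
                gMat (fun i => (k i : ℝ)) Λ a b : ℝ) : ℂ) *
              (vVec t k ⬝ᵥ ((CappWM ρ ν α N t Λ)⁻¹ *ᵥ uVec t k)))
        0 :=
  stmt19_general p d m N ρ ν α t Λ hΛ hφ hC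
end
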